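/- For every n ≥ 1 and every n×n density matrix ρ, the subentropy is bounded by 1 minus Euler's constant: Q(ρ) ≤ 1 − γ, where γ is the Euler–Mascheroni constant. Moreover, lim_{n→∞} (ln n − C_n) = 1 − γ, and the sequence (ln n − C_n) is monotonically increasing in n. -/

import Mathlib

open MeasureTheory Matrix
open scoped ComplexOrder

/-- η(y) = −y ln y (with ln 0 = 0 in Mathlib, so 0 ln 0 = 0). -/
noncomputable def eta (y : ℝ) : ℝ := -(y * Real.log y)

/-- C_n = 1/2 + 1/3 + ⋯ + 1/n (C_1 = 0). -/
noncomputable def harmC (n : ℕ) : ℝ := ∑ k ∈ Finset.Icc 2 n, (1 : ℝ) / k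

/-- Integral of a function over the probability simplex Δ_n with respect to the
normalized uniform measure dx = (n−1)! dx_1 ⋯ dx_{n−1}, realised in the coordinates
(x_1, …, x_{n−1}), with x_n = 1 − (x_1 + ⋯ + x_{n−1}). -/
noncomputable def simplexIntegral (n : ℕ) (f : (Fin n → ℝ) → ℝ) : ℝ :=
  ((n - 1).factorial : ℝ) *
    ∫ y in {y : Fin (n - 1) → ℝ | (∀ i, 0 ≤ y i) ∧ ∑ i, y i ≤ 1},
      f (fun i => if h : (i : ℕ) < n - 1 then y ⟨(i : ℕ), h⟩ else 1 - ∑ j, y j)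

/-- Subentropy of a probability vector: F(λ) = n ∫_{Δ_n} η(λ·x) dx − C_n. -/
noncomputable def subF (n : ℕ) (lam : Fin n → ℝ) : ℝ :=
  (n : ℝ) * simplexIntegral n (fun x => eta (∑ i, lam i * x i)) - harmC n

/-- Subentropy of a (Hermitian) matrix: Q(ρ) = F(λ(ρ)), the subentropy of its
eigenvalue vector (junk value 0 for non-Hermitian matrices). -/
noncomputable def Qmat {ι : Type} [Fintype ι] [DecidableEq ι] (ρ : Matrix ι ι ℂ) : ℝ :=
  if h : ρ.IsHermitian then
    subF (Fintype.card ι) (fun k => h.eigenvalues ((Fintype.equivFin ι).symm k))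
  else 0

/-! The barycentric coordinates of a uniform point of the simplex `Δ_n` all have mean `1/n`
(computed by slicing the corner `{y ≥ 0, ∑ y ≤ t} ⊆ ℝ^m`, of volume `t^m / m!`, along one
coordinate), so `λ·x` has mean `1/n` for every probability vector `λ`. Since `η` is concave,
Jensen's inequality gives `n ∫ η(λ·x) dx ≤ n η(1/n) = ln n`, that is `F(λ) ≤ ln n − C_n`.
Finally `ln n − C_n = 1 − (H_n − ln n)`, and `H_n − ln n` decreases strictly to `γ`. -/

open scoped ENNReal

def cornerSimplex (m : ℕ) (t : ℝ) : Set (Fin m → ℝ) := {y | (∀ i, 0 ≤ y i) ∧ ∑ i, y i ≤ t}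

lemma isClosed_cornerSimplex (m : ℕ) (t : ℝ) : IsClosed (cornerSimplex m t) := by
  simp only [cornerSimplex, Set.ofPred_and, Set.ofPred_forall]
  exact (isClosed_iInter fun i => isClosed_le continuous_const (continuous_apply i)).inter
    (isClosed_le (continuous_finsetSum _ fun i _ => continuous_apply i) continuous_const)

lemma measurableSet_cornerSimplex (m : ℕ) (t : ℝ) : MeasurableSet (cornerSimplex m t) :=
  (isClosed_cornerSimplex m t).measurableSet

lemma cornerSimplex_subset_Icc (m : ℕ) (t : ℝ) : cornerSimplex m t ⊆ Set.Icc 0 (fun _ => t) :=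
  fun _ hy => ⟨hy.1, fun i =>
    (Finset.single_le_sum (fun j _ => hy.1 j) (Finset.mem_univ i)).trans hy.2⟩

lemma isCompact_cornerSimplex (m : ℕ) (t : ℝ) : IsCompact (cornerSimplex m t) :=
  isCompact_Icc.of_isClosed_subset (isClosed_cornerSimplex m t) (cornerSimplex_subset_Icc m t)

lemma piFinSuccAbove_preimage_cornerSimplex (m : ℕ) (t : ℝ) (i : Fin (m + 1)) :
    MeasurableEquiv.piFinSuccAbove (fun _ => ℝ) i ⁻¹'
        {p | p.1 ∈ Set.Icc 0 t ∧ p.2 ∈ cornerSimplex m (t - p.1)} = cornerSimplex (m + 1) t := by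
  ext y
  simp only [cornerSimplex, Set.mem_preimage, Set.mem_ofPred_eq, Set.mem_Icc,
    Fin.forall_iff_succAbove i, Fin.sum_univ_succAbove _ i]
  change ((0 ≤ y i ∧ y i ≤ t) ∧ (∀ j, 0 ≤ y (i.succAbove j)) ∧ ∑ j, y (i.succAbove j) ≤ t - y i) ↔ _
  constructor
  · rintro ⟨⟨h0, -⟩, hnn, hsum⟩
    exact ⟨⟨h0, hnn⟩, by linarith⟩
  · rintro ⟨⟨h0, hnn⟩, hsum⟩
    have := Finset.sum_nonneg (s := .univ) fun j _ => hnn j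
    exact ⟨⟨h0, by linarith⟩, hnn, by linarith⟩

lemma setLIntegral_cornerSimplex_succ (m : ℕ) (t : ℝ) (i : Fin (m + 1)) {g : ℝ → ℝ≥0∞}
    (hg : Measurable g) :
    ∫⁻ y in cornerSimplex (m + 1) t, g (y i) =
      ∫⁻ s in Set.Icc 0 t, g s * volume (cornerSimplex m (t - s)) := by
  set e := MeasurableEquiv.piFinSuccAbove (fun _ : Fin (m + 1) => ℝ) i
  set T := {p : ℝ × (Fin m → ℝ) | p.1 ∈ Set.Icc 0 t ∧ p.2 ∈ cornerSimplex m (t - p.1)}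
  have hT : MeasurableSet T := e.measurableSet_preimage.mp <| by
    rw [piFinSuccAbove_preimage_cornerSimplex]; exact measurableSet_cornerSimplex _ _
  rw [← piFinSuccAbove_preimage_cornerSimplex m t i]
  refine ((volume_preserving_piFinSuccAbove (fun _ : Fin (m + 1) => ℝ) i)
    |>.setLIntegral_comp_preimage (f := fun p => g p.1) hT (hg.comp measurable_fst)).trans ?_
  rw [Measure.volume_eq_prod, ← lintegral_indicator hT,
    lintegral_prod (T.indicator fun p => g p.1)
      ((hg.comp measurable_fst).indicator hT).aemeasurable,
    ← lintegral_indicator measurableSet_Icc]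
  congr 1 with s
  by_cases hs : s ∈ Set.Icc 0 t
  · have hfibre : ∀ y, T.indicator (fun p => g p.1) (s, y) =
        (cornerSimplex m (t - s)).indicator (fun _ => g s) y := fun y => by
      by_cases hy : y ∈ cornerSimplex m (t - s)
      · rw [Set.indicator_of_mem (show (s, y) ∈ T from ⟨hs, hy⟩), Set.indicator_of_mem hy]
      · rw [Set.indicator_of_notMem (show (s, y) ∉ T from fun h => hy h.2),
          Set.indicator_of_notMem hy]
    simp only [hfibre, Set.indicator_of_mem hs,
      lintegral_indicator_const (measurableSet_cornerSimplex m _)]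
  · simp [Set.indicator, T, hs]

lemma integral_const_sub_pow (m : ℕ) (t : ℝ) :
    ∫ s in (0 : ℝ)..t, (t - s) ^ m = t ^ (m + 1) / (m + 1) := by
  rw [intervalIntegral.integral_comp_sub_left (fun x => x ^ m) t, sub_self, sub_zero, integral_pow,
    zero_pow m.succ_ne_zero, sub_zero]

lemma setLIntegral_Icc_ofReal {f : ℝ → ℝ} (hf : Continuous f) {t : ℝ} (ht : 0 ≤ t)
    (hf₀ : ∀ s ∈ Set.Icc 0 t, 0 ≤ f s) :
    ∫⁻ s in Set.Icc 0 t, ENNReal.ofReal (f s) = ENNReal.ofReal (∫ s in (0 : ℝ)..t, f s) := by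
  rw [intervalIntegral.integral_of_le ht, ← integral_Icc_eq_integral_Ioc,
    ofReal_integral_eq_lintegral_ofReal hf.integrableOn_Icc
      ((ae_restrict_iff' measurableSet_Icc).mpr (.of_forall hf₀))]

lemma volume_cornerSimplex (m : ℕ) {t : ℝ} (ht : 0 ≤ t) :
    volume (cornerSimplex m t) = ENNReal.ofReal (t ^ m / m.factorial) := by
  induction m generalizing t with
  | zero =>
    have : cornerSimplex 0 t = Set.univ := by ext y; simp [cornerSimplex, ht]
    simp [this, volume_pi]
  | succ m ih =>
    have hslice := setLIntegral_cornerSimplex_succ m t 0 (g := fun _ => 1) measurable_const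
    simp only [setLIntegral_one, one_mul] at hslice
    rw [hslice, setLIntegral_congr_fun measurableSet_Icc
        (fun s hs => ih (sub_nonneg.mpr hs.2)),
      setLIntegral_Icc_ofReal (by fun_prop) ht
        (fun s hs => by have := sub_nonneg.mpr hs.2; positivity),
      intervalIntegral.integral_div, integral_const_sub_pow, Nat.factorial_succ]
    push_cast
    field_simp

lemma setLIntegral_cornerSimplex_ofReal_apply (m : ℕ) {t : ℝ} (ht : 0 ≤ t) (i : Fin (m + 1)) :
    ∫⁻ y in cornerSimplex (m + 1) t, ENNReal.ofReal (y i) =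
      ENNReal.ofReal (t ^ (m + 2) / (m + 2).factorial) := by
  have hfibre : ∀ s ∈ Set.Icc 0 t, ENNReal.ofReal s * volume (cornerSimplex m (t - s)) =
      ENNReal.ofReal (s * ((t - s) ^ m / m.factorial)) := fun s hs => by
    rw [volume_cornerSimplex m (sub_nonneg.mpr hs.2), ← ENNReal.ofReal_mul hs.1]
  rw [setLIntegral_cornerSimplex_succ m t i ENNReal.measurable_ofReal,
    setLIntegral_congr_fun measurableSet_Icc hfibre,
    setLIntegral_Icc_ofReal (by fun_prop) ht
      (fun s hs => by have := sub_nonneg.mpr hs.2; have := hs.1; positivity)]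
  congr 1
  have hsplit : ∀ s, s * ((t - s) ^ m / m.factorial) =
      (t * (t - s) ^ m - (t - s) ^ (m + 1)) / m.factorial := fun s => by ring
  simp_rw [hsplit]
  rw [intervalIntegral.integral_div,
    intervalIntegral.integral_sub (Continuous.intervalIntegrable (by fun_prop) _ _)
      (Continuous.intervalIntegrable (by fun_prop) _ _),
    intervalIntegral.integral_const_mul, integral_const_sub_pow, integral_const_sub_pow,
    Nat.factorial_succ, Nat.factorial_succ]
  push_cast
  field_simp
  ring

lemma setIntegral_cornerSimplex_apply (m : ℕ) {t : ℝ} (ht : 0 ≤ t) (i : Fin m) :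
    ∫ y in cornerSimplex m t, y i = t ^ (m + 1) / (m + 1).factorial := by
  cases m with
  | zero => exact i.elim0
  | succ m =>
    rw [integral_eq_lintegral_of_nonneg_ae
        ((ae_restrict_iff' (measurableSet_cornerSimplex _ _)).mpr (.of_forall fun y hy => hy.1 i))
        (measurable_pi_apply i).aestronglyMeasurable,
      setLIntegral_cornerSimplex_ofReal_apply m ht i, ENNReal.toReal_ofReal (by positivity)]

def simplexChart (m : ℕ) (y : Fin m → ℝ) : Fin (m + 1) → ℝ :=
  fun i => if h : (i : ℕ) < m then y ⟨i, h⟩ else 1 - ∑ j, y j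

@[fun_prop]
lemma continuous_simplexChart (m : ℕ) : Continuous (simplexChart m) := by
  refine continuous_pi fun i => ?_
  unfold simplexChart
  split_ifs <;> fun_prop

lemma simplexChart_nonneg {m : ℕ} {y : Fin m → ℝ} (hy : y ∈ cornerSimplex m 1)
    (i : Fin (m + 1)) :
    0 ≤ simplexChart m y i := by
  unfold simplexChart
  split_ifs
  · exact hy.1 _
  · exact sub_nonneg.mpr hy.2

lemma integrableOn_cornerSimplex {m : ℕ} {t : ℝ} {f : (Fin m → ℝ) → ℝ} (hf : Continuous f) :
    IntegrableOn f (cornerSimplex m t) :=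
  hf.continuousOn.integrableOn_compact (isCompact_cornerSimplex m t)

lemma measureReal_cornerSimplex_one (m : ℕ) :
    volume.real (cornerSimplex m 1) = 1 / m.factorial := by
  rw [measureReal_def, volume_cornerSimplex m zero_le_one, one_pow,
    ENNReal.toReal_ofReal (by positivity)]

lemma setIntegral_simplexChart_apply (m : ℕ) (i : Fin (m + 1)) :
    ∫ y in cornerSimplex m 1, simplexChart m y i = 1 / (m + 1).factorial := by
  unfold simplexChart
  split_ifs with h
  · simpa using setIntegral_cornerSimplex_apply m zero_le_one ⟨i, h⟩
  · rw [integral_sub (integrableOn_cornerSimplex continuous_const)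
        (integrableOn_cornerSimplex (by fun_prop)),
      integral_finsetSum _ fun j _ => integrableOn_cornerSimplex (continuous_apply j),
      setIntegral_const, measureReal_cornerSimplex_one]
    simp only [setIntegral_cornerSimplex_apply m zero_le_one, one_pow, Finset.sum_const,
      Finset.card_univ, Fintype.card_fin, nsmul_eq_mul, smul_eq_mul, mul_one, Nat.factorial_succ]
    push_cast
    field_simp
    ring

lemma simplexIntegral_succ_eq_setAverage (m : ℕ) (f : (Fin (m + 1) → ℝ) → ℝ) :
    simplexIntegral (m + 1) f = ⨍ y in cornerSimplex m 1, f (simplexChart m y) := by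
  rw [setAverage_eq, measureReal_cornerSimplex_one, smul_eq_mul, one_div, inv_inv]
  rfl

lemma simplexIntegral_dotProduct (m : ℕ) (lam : Fin (m + 1) → ℝ) :
    simplexIntegral (m + 1) (fun x => ∑ i, lam i * x i) = (∑ i, lam i) / (m + 1) := by
  change (m.factorial : ℝ) * ∫ y in cornerSimplex m 1, ∑ i, lam i * simplexChart m y i = _
  rw [integral_finsetSum _ fun i _ => integrableOn_cornerSimplex (by fun_prop)]
  simp only [integral_const_mul, setIntegral_simplexChart_apply, ← Finset.sum_mul,
    Nat.factorial_succ]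
  push_cast
  field_simp

lemma simplexIntegral_negMulLog_dotProduct_le (m : ℕ) {lam : Fin (m + 1) → ℝ}
    (hlam₀ : ∀ i, 0 ≤ lam i) (hlam₁ : ∑ i, lam i = 1) :
    simplexIntegral (m + 1) (fun x => Real.negMulLog (∑ i, lam i * x i)) ≤
      Real.negMulLog (1 / (m + 1)) := by
  have hdot := simplexIntegral_dotProduct m lam
  rw [hlam₁, simplexIntegral_succ_eq_setAverage] at hdot
  rw [simplexIntegral_succ_eq_setAverage, ← hdot]
  have hvol := volume_cornerSimplex m (t := 1) zero_le_one
  have hcont : Continuous fun y => ∑ i, lam i * simplexChart m y i := by fun_prop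
  refine Real.concaveOn_negMulLog.le_map_set_average Real.continuous_negMulLog.continuousOn
    isClosed_Ici (by simp [hvol]; positivity) (by simp [hvol])
    ((ae_restrict_iff' (measurableSet_cornerSimplex _ _)).mpr (.of_forall fun y hy =>
      Finset.sum_nonneg fun i _ => mul_nonneg (hlam₀ i) (simplexChart_nonneg hy i)))
    (integrableOn_cornerSimplex hcont)
    (integrableOn_cornerSimplex (Real.continuous_negMulLog.comp hcont))

lemma eta_eq_negMulLog : eta = Real.negMulLog := by
  funext y
  simp [eta, Real.negMulLog, neg_mul]

lemma subF_le_log_sub_harmC {n : ℕ} {lam : Fin n → ℝ} (hlam₀ : ∀ i, 0 ≤ lam i)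
    (hlam₁ : ∑ i, lam i = 1) : subF n lam ≤ Real.log n - harmC n := by
  cases n with
  | zero => simp at hlam₁
  | succ m =>
    have hjensen := simplexIntegral_negMulLog_dotProduct_le m hlam₀ hlam₁
    have hpos : (0 : ℝ) < m + 1 := by positivity
    rw [Real.negMulLog, one_div, Real.log_inv] at hjensen
    rw [subF, eta_eq_negMulLog, Nat.cast_succ]
    have := mul_le_mul_of_nonneg_left hjensen hpos.le
    field_simp at this
    linarith

lemma harmC_eq_harmonic_sub_one {n : ℕ} (hn : 1 ≤ n) : harmC n = harmonic n - 1 := by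
  rw [harmC, harmonic_eq_sum_Icc, ← Finset.add_sum_Ioc_eq_sum_Icc hn]
  push_cast
  simp [one_div, ← Finset.Icc_add_one_left_eq_Ioc]

lemma log_sub_harmC_eq {n : ℕ} (hn : 1 ≤ n) :
    Real.log n - harmC n = 1 - Real.eulerMascheroniSeq' n := by
  rw [harmC_eq_harmonic_sub_one hn, Real.eulerMascheroniSeq', if_neg (by omega)]
  ring

lemma tendsto_log_sub_harmC :
    Filter.Tendsto (fun n : ℕ => Real.log n - harmC n) Filter.atTop
      (nhds (1 - Real.eulerMascheroniConstant)) :=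
  (tendsto_const_nhds.sub Real.tendsto_eulerMascheroniSeq').congr'
    (Filter.eventually_atTop.mpr ⟨1, fun _ hn => (log_sub_harmC_eq hn).symm⟩)

lemma strictMonoOn_log_sub_harmC :
    StrictMonoOn (fun n : ℕ => Real.log n - harmC n) (Set.Ici 1) := fun a ha b hb hab => by
  simp only [log_sub_harmC_eq ha, log_sub_harmC_eq hb]
  linarith [Real.strictAnti_eulerMascheroniSeq' hab]

lemma log_sub_harmC_lt_one_sub_eulerMascheroniConstant {n : ℕ} (hn : 1 ≤ n) :
    Real.log n - harmC n < 1 - Real.eulerMascheroniConstant := by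
  rw [log_sub_harmC_eq hn]
  linarith [Real.eulerMascheroniConstant_lt_eulerMascheroniSeq' n]

lemma Qmat_le_log_sub_harmC {ι : Type} [Fintype ι] [DecidableEq ι] {ρ : Matrix ι ι ℂ}
    (hρ : ρ.PosSemidef) (htr : ρ.trace = 1) :
    Qmat ρ ≤ Real.log (Fintype.card ι) - harmC (Fintype.card ι) := by
  rw [Qmat, dif_pos hρ.isHermitian]
  refine subF_le_log_sub_harmC (fun k => hρ.eigenvalues_nonneg _) ?_
  rw [Equiv.sum_comp (Fintype.equivFin ι).symm hρ.isHermitian.eigenvalues]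
  apply Complex.ofReal_injective
  simpa [htr] using hρ.isHermitian.trace_eq_sum_eigenvalues.symm

/-- Q(ρ) ≤ 1 − γ for every density matrix; ln n − C_n → 1 − γ;
and ln n − C_n is monotonically increasing in n (for n ≥ 1). -/
theorem subentropy_le_one_sub_gamma :
    (∀ (n : ℕ), 1 ≤ n → ∀ (ρ : Matrix (Fin n) (Fin n) ℂ), ρ.PosSemidef → ρ.trace = 1 →
      Qmat ρ ≤ 1 - Real.eulerMascheroniConstant) ∧
    Filter.Tendsto (fun n : ℕ => Real.log n - harmC n) Filter.atTop
      (nhds (1 - Real.eulerMascheroniConstant)) ∧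
    StrictMonoOn (fun n : ℕ => Real.log n - harmC n) (Set.Ici 1) := by
  refine ⟨fun n hn ρ hρ htr => ?_, tendsto_log_sub_harmC, strictMonoOn_log_sub_harmC⟩
  have := Qmat_le_log_sub_harmC hρ htr
  rw [Fintype.card_fin] at this
  exact this.trans (log_sub_harmC_lt_one_sub_eulerMascheroniConstant hn).le
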